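/- The Pedersen ideal of the C*-algebra ℓ∞(G, K) of bounded functions from a set G to the compact operators K equals ℓ∞(G, F), the set of bounded functions whose values are finite-rank operators. -/

import Mathlib

open scoped ENNReal

/-- The Hilbert space `ℓ²(ℕ)`. -/
noncomputable abbrev HS : Type := lp (fun _ : ℕ => ℂ) 2

/-- `f` is an element of `ℓ∞(G, B(HS))`, i.e. a bounded operator-valued function. -/
def Bdd {G : Type*} (f : G → HS →L[ℂ] HS) : Prop := ∃ C : ℝ, ∀ t, ‖f t‖ ≤ C

/-- `f` takes values in the compact operators. -/
def Cpt {G : Type*} (f : G → HS →L[ℂ] HS) : Prop := ∀ t, IsCompactOperator (f t)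

/-- `T` is a finite-rank operator. -/
def FinRank (T : HS →L[ℂ] HS) : Prop :=
  FiniteDimensional ℂ (LinearMap.range (T : HS →ₗ[ℂ] HS))

/-- `I` is a two-sided (algebraic) ideal of `ℓ∞(G, K)` (with pointwise operations) which is
dense in `ℓ∞(G, K)` for the sup-norm. -/
def IsDenseIdeal {G : Type*} (I : Set (G → HS →L[ℂ] HS)) : Prop :=
  (∀ f ∈ I, Bdd f ∧ Cpt f) ∧
  (0 : G → HS →L[ℂ] HS) ∈ I ∧
  (∀ f ∈ I, ∀ g ∈ I, f + g ∈ I) ∧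
  (∀ c : ℂ, ∀ f ∈ I, (fun t => c • f t) ∈ I) ∧
  (∀ f ∈ I, ∀ g : G → HS →L[ℂ] HS, Bdd g → Cpt g →
    (fun t => g t * f t) ∈ I ∧ (fun t => f t * g t) ∈ I) ∧
  (∀ f : G → HS →L[ℂ] HS, Bdd f → Cpt f → ∀ ε : ℝ, 0 < ε →
    ∃ g ∈ I, ∀ t, ‖f t - g t‖ ≤ ε)

/-!
Finite-rank functions form a dense ideal because every compact operator is uniformly approximated
by its compressions `P ∘ T` to finite-dimensional subspaces, with `‖P ∘ T‖ ≤ ‖T‖`. Conversely, let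
`I` be a dense ideal and `f` bounded with finite-rank values. The range projections `p t` of `f t`
form a bounded compact family, so some `g ∈ I` satisfies `‖p t - g t‖ ≤ 1/2` for all `t`.
Compressed to the range of `f t`, `g t` is then invertible by a Neumann series with inverse of norm
at most `2`; this gives a bounded finite-rank `s` with `s * g * f = f`, which lies in `I`.
-/

open ContinuousLinearMap Submodule Metric

section InnerProductSpace

variable {𝕜 E F : Type*} [RCLike 𝕜] [NormedAddCommGroup E] [InnerProductSpace 𝕜 E]
  [NormedAddCommGroup F] [NormedSpace 𝕜 F]

theorem isCompactOperator_of_finiteDimensional_range (T : F →L[𝕜] E)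
    [FiniteDimensional 𝕜 (LinearMap.range (T : F →ₗ[𝕜] E))] : IsCompactOperator T :=
  (isCompactOperator_of_locallyCompactSpace_dom
    (T.codRestrict _ (LinearMap.mem_range_self (T : F →ₗ[𝕜] E)))).clm_comp
    (LinearMap.range (T : F →ₗ[𝕜] E)).subtypeL

theorem Submodule.norm_sub_starProjection_le (U : Submodule 𝕜 E) [U.HasOrthogonalProjection]
    (y : E) {c : E} (hc : c ∈ U) : ‖y - U.starProjection y‖ ≤ ‖y - c‖ := by
  rw [starProjection_minimal]
  exact ciInf_le ⟨0, Set.forall_mem_range.mpr fun _ => norm_nonneg _⟩ (⟨c, hc⟩ : U)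

theorem IsCompactOperator.exists_norm_sub_starProjection_comp_le {T : F →L[𝕜] E}
    (hT : IsCompactOperator T) {ε : ℝ} (hε : 0 < ε) :
    ∃ (V : Submodule 𝕜 E) (_ : FiniteDimensional 𝕜 V), ‖T - V.starProjection ∘L T‖ ≤ ε := by
  obtain ⟨t, ht, hcover⟩ := totallyBounded_iff.mp
    ((hT.isCompact_closure_image_closedBall 1).totallyBounded.subset subset_closure) ε hε
  have := FiniteDimensional.span_of_finite 𝕜 ht
  refine ⟨span 𝕜 t, this, opNorm_le_of_unit_norm hε.le fun x hx => ?_⟩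
  obtain ⟨c, hct, hxc⟩ := Set.mem_iUnion₂.mp (hcover ⟨x, by simpa using hx.le, rfl⟩)
  calc ‖(T - (span 𝕜 t).starProjection ∘L T) x‖ = ‖T x - (span 𝕜 t).starProjection (T x)‖ := rfl
    _ ≤ ‖T x - c‖ := norm_sub_starProjection_le _ _ (subset_span hct)
    _ ≤ ε := (mem_ball_iff_norm.mp hxc).le

theorem Submodule.exists_leftInverseOn_of_norm_starProjection_sub_lt (V : Submodule 𝕜 E)
    [CompleteSpace V] {g : E →L[𝕜] E} (hg : ‖V.starProjection - g‖ < 1) :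
    ∃ s : E →L[𝕜] E, (∀ x, s x ∈ V) ∧ ‖s‖ ≤ (1 - ‖V.starProjection - g‖)⁻¹ ∧
      ∀ v ∈ V, s (g v) = v := by
  set P := V.orthogonalProjectionOnto
  have hP : ‖P‖ ≤ 1 := orthogonalProjectionOnto_norm_le V
  set A : V →L[𝕜] V := P ∘L g ∘L V.subtypeL
  have hA : 1 - A = P ∘L (V.starProjection - g) ∘L V.subtypeL := by
    ext v; simp [A, P]
  have hA_norm : ‖1 - A‖ ≤ ‖V.starProjection - g‖ :=
    calc ‖1 - A‖ ≤ ‖P‖ * (‖V.starProjection - g‖ * ‖V.subtypeL‖) := by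
          rw [hA]; exact (opNorm_comp_le _ _).trans (by gcongr; exact opNorm_comp_le _ _)
      _ ≤ 1 * (‖V.starProjection - g‖ * 1) := by gcongr; exact norm_subtypeL_le V
      _ = _ := by ring
  have hA_lt : ‖1 - A‖ < 1 := hA_norm.trans_lt hg
  set u := Units.oneSub (1 - A) hA_lt
  have hu : (u : V →L[𝕜] V) = A := by simp [u]
  have hu_inv : ‖(↑u⁻¹ : V →L[𝕜] V)‖ ≤ (1 - ‖V.starProjection - g‖)⁻¹ :=
    calc ‖(↑u⁻¹ : V →L[𝕜] V)‖ ≤ ‖(1 : V →L[𝕜] V)‖ - 1 + (1 - ‖1 - A‖)⁻¹ :=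
          tsum_geometric_le_of_norm_lt_one _ hA_lt
      _ ≤ 1 - 1 + (1 - ‖V.starProjection - g‖)⁻¹ := by
          gcongr
          exact norm_id_le
      _ = _ := by ring
  refine ⟨V.subtypeL ∘L ↑u⁻¹ ∘L P, fun x => Subtype.prop _, ?_, fun v hv => ?_⟩
  · calc ‖V.subtypeL ∘L ↑u⁻¹ ∘L P‖ ≤ ‖V.subtypeL‖ * (‖(↑u⁻¹ : V →L[𝕜] V)‖ * ‖P‖) :=
          (opNorm_comp_le _ _).trans (by gcongr; exact opNorm_comp_le _ _)
      _ ≤ 1 * ((1 - ‖V.starProjection - g‖)⁻¹ * 1) := by gcongr; exact norm_subtypeL_le V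
      _ = _ := by ring
  · have : P (g v) = (u : V →L[𝕜] V) ⟨v, hv⟩ := by rw [hu]; rfl
    change ((↑u⁻¹ : V →L[𝕜] V) (P (g v)) : E) = v
    rw [this, ← mul_apply_eq_comp, u.inv_mul, one_apply_eq_self]

end InnerProductSpace

theorem FinRank.of_forall_mem {T : HS →L[ℂ] HS} (V : Submodule ℂ HS) [FiniteDimensional ℂ V]
    (h : ∀ x, T x ∈ V) : FinRank T := by
  unfold FinRank
  exact Submodule.finiteDimensional_of_le (by rintro _ ⟨x, rfl⟩; exact h x)

theorem finRank_zero : FinRank 0 :=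
  FinRank.of_forall_mem ⊥ fun _ => zero_mem _

theorem FinRank.add {S T : HS →L[ℂ] HS} (hS : FinRank S) (hT : FinRank T) : FinRank (S + T) :=
  have : FiniteDimensional ℂ _ := hS
  have : FiniteDimensional ℂ _ := hT
  FinRank.of_forall_mem _ fun x =>
    add_mem_sup (LinearMap.mem_range_self (S : HS →ₗ[ℂ] HS) x)
      (LinearMap.mem_range_self (T : HS →ₗ[ℂ] HS) x)

theorem FinRank.smul {T : HS →L[ℂ] HS} (hT : FinRank T) (c : ℂ) : FinRank (c • T) :=
  have : FiniteDimensional ℂ _ := hT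
  FinRank.of_forall_mem _ fun x => smul_mem _ c (LinearMap.mem_range_self (T : HS →ₗ[ℂ] HS) x)

theorem FinRank.mul_left {T : HS →L[ℂ] HS} (hT : FinRank T) (S : HS →L[ℂ] HS) :
    FinRank (S * T) :=
  have : FiniteDimensional ℂ _ := hT
  FinRank.of_forall_mem ((LinearMap.range (T : HS →ₗ[ℂ] HS)).map (S : HS →ₗ[ℂ] HS)) fun x =>
    mem_map_of_mem (LinearMap.mem_range_self _ x)

theorem FinRank.mul_right {T : HS →L[ℂ] HS} (hT : FinRank T) (S : HS →L[ℂ] HS) :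
    FinRank (T * S) :=
  have : FiniteDimensional ℂ _ := hT
  FinRank.of_forall_mem _ fun x => LinearMap.mem_range_self (T : HS →ₗ[ℂ] HS) (S x)

theorem FinRank.isCompactOperator {T : HS →L[ℂ] HS} (hT : FinRank T) : IsCompactOperator T :=
  have : FiniteDimensional ℂ _ := hT
  isCompactOperator_of_finiteDimensional_range T

theorem FinRank.exists_projection_perturb_mul_eq {T : HS →L[ℂ] HS} (hT : FinRank T) :
    ∃ p : HS →L[ℂ] HS, FinRank p ∧ ‖p‖ ≤ 1 ∧ ∀ g : HS →L[ℂ] HS, ‖p - g‖ < 1 →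
      ∃ s : HS →L[ℂ] HS, FinRank s ∧ ‖s‖ ≤ (1 - ‖p - g‖)⁻¹ ∧ s * g * T = T := by
  set V := LinearMap.range (T : HS →ₗ[ℂ] HS)
  have : FiniteDimensional ℂ V := hT
  refine ⟨V.starProjection, .of_forall_mem V fun x => starProjection_apply_mem V x,
    starProjection_norm_le V, fun g hg => ?_⟩
  obtain ⟨s, hsV, hs_norm, hs⟩ := V.exists_leftInverseOn_of_norm_starProjection_sub_lt hg
  exact ⟨s, .of_forall_mem V hsV, hs_norm, ext fun x => hs _ (LinearMap.mem_range_self _ x)⟩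

section PointwiseBounds

variable {G : Type*} {f g : G → HS →L[ℂ] HS}

theorem Bdd.add (hf : Bdd f) (hg : Bdd g) : Bdd (f + g) := by
  obtain ⟨C, hC⟩ := hf
  obtain ⟨D, hD⟩ := hg
  exact ⟨C + D, fun t => (norm_add_le _ _).trans (add_le_add (hC t) (hD t))⟩

theorem Bdd.smul (hf : Bdd f) (c : ℂ) : Bdd fun t => c • f t := by
  obtain ⟨C, hC⟩ := hf
  exact ⟨‖c‖ * C, fun t =>
    (norm_smul_le c _).trans (mul_le_mul_of_nonneg_left (hC t) (norm_nonneg c))⟩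

theorem Bdd.mul (hf : Bdd f) (hg : Bdd g) : Bdd fun t => f t * g t := by
  obtain ⟨C, hC⟩ := hf
  obtain ⟨D, hD⟩ := hg
  refine ⟨max C 0 * max D 0, fun t => (norm_mul_le _ _).trans ?_⟩
  exact mul_le_mul ((hC t).trans (le_max_left _ _)) ((hD t).trans (le_max_left _ _))
    (norm_nonneg _) (le_max_right _ _)

end PointwiseBounds

theorem isDenseIdeal_setOf_bdd_finRank (G : Type*) :
    IsDenseIdeal {f : G → HS →L[ℂ] HS | Bdd f ∧ ∀ t, FinRank (f t)} := by
  refine ⟨fun f hf => ⟨hf.1, fun t => (hf.2 t).isCompactOperator⟩,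
    ⟨⟨0, fun _ => norm_zero.le⟩, fun _ => finRank_zero⟩,
    fun f hf g hg => ⟨hf.1.add hg.1, fun t => (hf.2 t).add (hg.2 t)⟩,
    fun c f hf => ⟨hf.1.smul c, fun t => (hf.2 t).smul c⟩,
    fun f hf g hg _ => ⟨⟨hg.mul hf.1, fun t => (hf.2 t).mul_left (g t)⟩,
      ⟨hf.1.mul hg, fun t => (hf.2 t).mul_right (g t)⟩⟩,
    fun f ⟨C, hC⟩ hf ε hε => ?_⟩
  choose V _ hV using fun t => (hf t).exists_norm_sub_starProjection_comp_le hε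
  refine ⟨fun t => (V t).starProjection ∘L f t, ⟨⟨C, fun t => ?_⟩, fun t => ?_⟩, hV⟩
  · exact (opNorm_comp_le _ _).trans
      (by simpa using mul_le_mul (starProjection_norm_le (V t)) (hC t) (norm_nonneg _) zero_le_one)
  · exact .of_forall_mem (V t) fun x => starProjection_apply_mem _ _

theorem setOf_bdd_finRank_subset {G : Type*} {I : Set (G → HS →L[ℂ] HS)} (hI : IsDenseIdeal I) :
    {f : G → HS →L[ℂ] HS | Bdd f ∧ ∀ t, FinRank (f t)} ⊆ I := by
  obtain ⟨-, -, -, -, hI_mul, hI_dense⟩ := hI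
  rintro f ⟨hf_bdd, hf⟩
  choose p hp hp_norm hp_inv using fun t => (hf t).exists_projection_perturb_mul_eq
  obtain ⟨g, hgI, hpg⟩ := hI_dense p ⟨1, hp_norm⟩ (fun t => (hp t).isCompactOperator) (1 / 2)
    one_half_pos
  choose s hs hs_norm hsgf using fun t => hp_inv t (g t) ((hpg t).trans_lt one_half_lt_one)
  have hs_bdd : Bdd s := ⟨2, fun t => (hs_norm t).trans <| by
    rw [inv_le_comm₀ (by linarith [hpg t]) two_pos]; linarith [hpg t]⟩
  have hgf : (fun t => g t * f t) ∈ I :=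
    (hI_mul g hgI f hf_bdd fun t => (hf t).isCompactOperator).2
  have hsgf_mem := (hI_mul _ hgf s hs_bdd fun t => (hs t).isCompactOperator).1
  simpa only [← mul_assoc, hsgf] using hsgf_mem

/-- The Pedersen ideal of `ℓ∞(G, K)` equals `ℓ∞(G, F)`, the bounded functions
with finite-rank values: `ℓ∞(G, F)` is a dense two-sided ideal of `ℓ∞(G, K)` and it is
contained in every dense two-sided ideal. -/
theorem stmt17 (G : Type*) :
    IsDenseIdeal {f : G → HS →L[ℂ] HS | Bdd f ∧ ∀ t, FinRank (f t)} ∧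
    ∀ I : Set (G → HS →L[ℂ] HS), IsDenseIdeal I →
      {f : G → HS →L[ℂ] HS | Bdd f ∧ ∀ t, FinRank (f t)} ⊆ I :=
  ⟨isDenseIdeal_setOf_bdd_finRank G, fun _ => setOf_bdd_finRank_subset⟩
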